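/- arXiv:2501.03239 — 4 statements merged into one kernel-verified Lean document; each statement's English description precedes it below -/
import Mathlib

section
/- (Theorem 1) Let α < β be real numbers and (b_m)_{m≥1} a sequence of positive real numbers with lim_{m→∞} b_m²/m = 0. Let g : ℝ → ℝ be bounded and uniformly continuous. Then the shifted m-th Bernstein–Chlodowsky operators converge to g uniformly on the intervals J_m = [α b_m, β b_m]; that is, sup_{x ∈ [α b_m, β b_m]} |B̃_m^{Cl}(g, J_m)(x) − g(x)| → 0 as m → ∞. -/
open Finset Filter Real

/-- Shifted Bernstein–Chlodowsky basis polynomial on `J = [αb, βb]`. -/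
noncomputable def qt (α β b : ℝ) (m k : ℕ) (x : ℝ) : ℝ :=
  (1 / ((β - α) ^ m * b ^ m)) * (m.choose k : ℝ) * (x - α * b) ^ k * (β * b - x) ^ (m - k)

/-- Shifted univariate `m`-th Bernstein–Chlodowsky operator on `J = [αb, βb]`. -/
noncomputable def BCl (α β b : ℝ) (m : ℕ) (g : ℝ → ℝ) (x : ℝ) : ℝ :=
  ∑ k ∈ Finset.range (m + 1), g ((β - α) * k * b / m + α * b) * qt α β b m k x

/-!
The substitution `x = αb + (β - α) b t` turns `B̃_m^{Cl}(g, J)` into the classical Bernstein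
operator on `[0, 1]` applied to `s ↦ g (αb + (β - α) b s)`. A bounded uniformly continuous `g`
satisfies `|g u - g v| ≤ ε + c (u - v)²` for every `ε > 0`, with `c` depending only on `ε`.
Since the Bernstein weights form a probability distribution with variance `t (1 - t) / m`
around `t`, the error is at most `ε + c (β - α)² b_m² / (4m)`, and `b_m² / m → 0`.
-/

open unitInterval

theorem UniformContinuous.exists_abs_sub_le_add_mul_dist_sq {X : Type*} [PseudoMetricSpace X]
    {g : X → ℝ} (hgu : UniformContinuous g) (hgbdd : ∃ C, ∀ x, |g x| ≤ C) {ε : ℝ} (hε : 0 < ε) :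
    ∃ c, 0 ≤ c ∧ ∀ u v, |g u - g v| ≤ ε + c * dist u v ^ 2 := by
  obtain ⟨C, hC⟩ := hgbdd
  obtain ⟨δ, hδ, hgδ⟩ := Metric.uniformContinuous_iff.mp hgu ε hε
  refine ⟨2 * |C| / δ ^ 2, by positivity, fun u v => ?_⟩
  rcases lt_or_ge (dist u v) δ with hnear | hfar
  · have := hgδ hnear
    rw [Real.dist_eq] at this
    have : 0 ≤ 2 * |C| / δ ^ 2 * dist u v ^ 2 := by positivity
    linarith
  · have hδuv : 2 * |C| ≤ 2 * |C| / δ ^ 2 * dist u v ^ 2 := by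
      rw [div_mul_eq_mul_div, le_div_iff₀ (by positivity)]
      gcongr
    calc |g u - g v| ≤ |g u| + |g v| := abs_sub _ _
      _ ≤ 2 * |C| := by linarith [hC u, hC v, le_abs_self C]
      _ ≤ ε + 2 * |C| / δ ^ 2 * dist u v ^ 2 := by linarith

theorem bernstein.abs_sum_sub_le {n : ℕ} (hn : n ≠ 0) (f : I → ℝ) (x : I) {ε c : ℝ}
    (hf : ∀ y : I, |f y - f x| ≤ ε + c * ((x : ℝ) - y) ^ 2) :
    |∑ k : Fin (n + 1), f (z k) * bernstein n k x - f x| ≤ ε + c * (x * (1 - x) / n) := by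
  have hdiff : ∑ k : Fin (n + 1), f (z k) * bernstein n k x - f x
      = ∑ k : Fin (n + 1), (f (z k) - f x) * bernstein n k x := by
    simp only [sub_mul, Finset.sum_sub_distrib, ← Finset.mul_sum, bernstein.probability, mul_one]
  calc |∑ k : Fin (n + 1), f (z k) * bernstein n k x - f x|
      ≤ ∑ k : Fin (n + 1), |f (z k) - f x| * bernstein n k x := by
        rw [hdiff]
        refine (Finset.abs_sum_le_sum_abs _ _).trans_eq (Finset.sum_congr rfl fun k _ => ?_)
        rw [abs_mul, abs_of_nonneg bernstein_nonneg]
    _ ≤ ∑ k : Fin (n + 1), (ε + c * ((x : ℝ) - z k) ^ 2) * bernstein n k x := by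
        gcongr with k
        exact hf _
    _ = ε + c * (x * (1 - x) / n) := by
        simp only [add_mul, Finset.sum_add_distrib, ← Finset.mul_sum, mul_assoc,
          bernstein.probability, bernstein.variance hn, mul_one]

theorem qt_affine_eq_bernstein {α β b : ℝ} (hL : (β - α) * b ≠ 0) {m k : ℕ} (hk : k ≤ m)
    (t : I) : qt α β b m k (α * b + (β - α) * b * t) = bernstein m k t := by
  have hpow : ((β - α) * b) ^ k * ((β - α) * b) ^ (m - k) = (β - α) ^ m * b ^ m := by
    rw [← pow_add, Nat.add_sub_cancel' hk, mul_pow]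
  have hleft : α * b + (β - α) * b * t - α * b = (β - α) * b * t := by ring
  have hright : β * b - (α * b + (β - α) * b * t) = (β - α) * b * (1 - t) := by ring
  rw [qt, hleft, hright, bernstein_apply, ← hpow]
  generalize (β - α) * b = L at hL
  rw [mul_pow L, mul_pow L]
  field_simp

theorem BCl_affine_eq_sum_bernstein {α β b : ℝ} (hL : (β - α) * b ≠ 0) (m : ℕ)
    (g : ℝ → ℝ) (t : I) :
    BCl α β b m g (α * b + (β - α) * b * t)
      = ∑ k : Fin (m + 1), g (α * b + (β - α) * b * bernstein.z k) * bernstein m k t := by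
  rw [BCl, Finset.sum_range]
  refine Finset.sum_congr rfl fun k _ => ?_
  rw [qt_affine_eq_bernstein hL k.is_le]
  congr 2
  simp only [bernstein.z]
  ring

theorem exists_unitInterval_affine_eq {α β b x : ℝ} (hαβ : α < β) (hb : 0 < b)
    (hx : x ∈ Set.Icc (α * b) (β * b)) : ∃ t : I, α * b + (β - α) * b * t = x := by
  have hL : 0 < (β - α) * b := mul_pos (by linarith) hb
  refine ⟨⟨(x - α * b) / ((β - α) * b), div_nonneg (by linarith [hx.1]) hL.le,
    (div_le_one hL).mpr (by linarith [hx.2])⟩, ?_⟩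
  change α * b + (β - α) * b * ((x - α * b) / ((β - α) * b)) = x
  rw [mul_div_cancel₀ _ hL.ne']
  ring

theorem abs_BCl_sub_le {α β b ε c : ℝ} (hαβ : α < β) (hb : 0 < b) {m : ℕ} (hm : m ≠ 0)
    {g : ℝ → ℝ} (hg : ∀ u v, |g u - g v| ≤ ε + c * (u - v) ^ 2) (hc : 0 ≤ c) {x : ℝ}
    (hx : x ∈ Set.Icc (α * b) (β * b)) :
    |BCl α β b m g x - g x| ≤ ε + c * (β - α) ^ 2 / 4 * (b ^ 2 / m) := by
  obtain ⟨t, rfl⟩ := exists_unitInterval_affine_eq hαβ hb hx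
  rw [BCl_affine_eq_sum_bernstein (mul_pos (sub_pos.mpr hαβ) hb).ne']
  refine (bernstein.abs_sum_sub_le hm (fun s => g (α * b + (β - α) * b * s)) t
    (ε := ε) (c := c * (β - α) ^ 2 * b ^ 2) fun s => ?_).trans ?_
  · exact (hg _ _).trans_eq (by ring)
  · have ht : (t : ℝ) * (1 - t) ≤ 1 / 4 := by nlinarith [sq_nonneg ((t : ℝ) - 1 / 2)]
    have hcoef : 0 ≤ c * (β - α) ^ 2 * b ^ 2 / m := by positivity
    calc ε + c * (β - α) ^ 2 * b ^ 2 * (t * (1 - t) / m)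
        = ε + c * (β - α) ^ 2 * b ^ 2 / m * (t * (1 - t)) := by ring
      _ ≤ ε + c * (β - α) ^ 2 * b ^ 2 / m * (1 / 4) := by gcongr
      _ = ε + c * (β - α) ^ 2 / 4 * (b ^ 2 / m) := by ring

theorem stmt9 (α β : ℝ) (hαβ : α < β) (b : ℕ → ℝ) (hb : ∀ m, 1 ≤ m → 0 < b m)
    (hlim : Filter.Tendsto (fun m : ℕ => (b m) ^ 2 / m) Filter.atTop (nhds 0))
    (g : ℝ → ℝ) (hgbdd : ∃ C, ∀ x, |g x| ≤ C) (hgu : UniformContinuous g) :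
    ∀ ε > 0, ∃ N, ∀ m ≥ N, 1 ≤ m → ∀ x ∈ Set.Icc (α * b m) (β * b m),
      |BCl α β (b m) m g x - g x| < ε := by
  intro ε hε
  obtain ⟨c, hc0, hc⟩ := hgu.exists_abs_sub_le_add_mul_dist_sq hgbdd (half_pos hε)
  have hg : ∀ u v, |g u - g v| ≤ ε / 2 + c * (u - v) ^ 2 := fun u v => by
    simpa only [Real.dist_eq, sq_abs] using hc u v
  have hsmall : ∀ᶠ m in atTop, c * (β - α) ^ 2 / 4 * (b m ^ 2 / m) < ε / 2 := by
    have := hlim.const_mul (c * (β - α) ^ 2 / 4)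
    rw [mul_zero] at this
    exact this.eventually_lt_const (half_pos hε)
  obtain ⟨N, hN⟩ := eventually_atTop.mp hsmall
  refine ⟨N, fun m hm hm1 x hx => ?_⟩
  have := abs_BCl_sub_le hαβ (hb m hm1) (Nat.one_le_iff_ne_zero.mp hm1) hg hc0 hx
  linarith [hN m hm]
end

section
/- Let α < β, b > 0, let φ₁, φ₂ : ℝ → ℝ be continuous with φ₁(x) < φ₂(x) for all x ∈ J = [αb, βb], let m ≥ 1 be a natural number, and let m_k ≥ 1 be positive integers for 0 ≤ k ≤ m. Then for every x ∈ J and every y ∈ ℝ, the bivariate shifted Bernstein–Chlodowsky–Stancu operator applied to the coordinate function (x,y) ↦ y satisfies the exact identity B̃_m^{Cl}[y; Δ](x, y) = ((y − φ₁(x))/(φ₂(x) − φ₁(x))) · B̃_m^{Cl}(φ₂ − φ₁, J)(x) + B̃_m^{Cl}(φ₁, J)(x), where B̃_m^{Cl}(h, J)(x) = Σ_{k=0}^{m} h((β−α)·k·b/m + αb) · q̃_{m,k}(x; J) denotes the univariate shifted Bernstein–Chlodowsky operator. -/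
open Finset Filter Real

/-- Basis polynomial `q̃_{n,j}(y; [φ₁(x), φ₂(x)])`. -/
noncomputable def qy (φ₁ φ₂ : ℝ → ℝ) (x : ℝ) (n j : ℕ) (y : ℝ) : ℝ :=
  (n.choose j : ℝ) * ((y - φ₁ x) / (φ₂ x - φ₁ x)) ^ j *
    ((φ₂ x - y) / (φ₂ x - φ₁ x)) ^ (n - j)

/-- Bivariate shifted Bernstein–Chlodowsky–Stancu operator on the domain `Δ`
bounded by `y = φ₁(x)`, `y = φ₂(x)`, `x = αb`, `x = βb`. -/
noncomputable def BivCl (α β b : ℝ) (φ₁ φ₂ : ℝ → ℝ) (m : ℕ) (mk : ℕ → ℕ)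
    (g : ℝ → ℝ → ℝ) (x y : ℝ) : ℝ :=
  ∑ k ∈ Finset.range (m + 1), ∑ j ∈ Finset.range (mk k + 1),
    g ((β - α) * b * ((k : ℝ) / m) + α * b)
      ((φ₂ ((β - α) * b * ((k : ℝ) / m) + α * b) - φ₁ ((β - α) * b * ((k : ℝ) / m) + α * b)) *
          ((j : ℝ) / mk k) + φ₁ ((β - α) * b * ((k : ℝ) / m) + α * b)) *
      qt α β b m k x * qy φ₁ φ₂ x (mk k) j y

/-!
In the `y`-direction the operator is, for each fixed node `x_k`, the Bernstein operator of degree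
`m_k` in the normalized variable `u = (y - φ₁ x) / (φ₂ x - φ₁ x)`, applied to the affine function
`t ↦ (φ₂ - φ₁)(x_k) t + φ₁(x_k)`. Bernstein operators reproduce affine functions, so the inner sum
collapses to `(φ₂ - φ₁)(x_k) u + φ₁(x_k)`, and the outer sum splits into the two univariate operators.
-/

section BernsteinEval

variable {R : Type*} [CommRing R]

theorem sum_choose_mul_pow_mul_one_sub_pow (n : ℕ) (u : R) :
    ∑ j ∈ range (n + 1), (n.choose j : R) * u ^ j * (1 - u) ^ (n - j) = 1 := by
  simpa [bernsteinPolynomial, Polynomial.eval_finsetSum] using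
    congrArg (Polynomial.eval u) (bernsteinPolynomial.sum R n)

theorem sum_mul_choose_mul_pow_mul_one_sub_pow (n : ℕ) (u : R) :
    ∑ j ∈ range (n + 1), (j : R) * ((n.choose j : R) * u ^ j * (1 - u) ^ (n - j)) = n * u := by
  simpa [bernsteinPolynomial, Polynomial.eval_finsetSum] using
    congrArg (Polynomial.eval u) (bernsteinPolynomial.sum_smul R n)

end BernsteinEval

theorem sum_affine_mul_choose_mul_pow_mul_one_sub_pow {K : Type*} [Field K] [CharZero K]
    {n : ℕ} (hn : n ≠ 0) (c d u : K) :
    ∑ j ∈ range (n + 1), (c * ((j : K) / n) + d) * ((n.choose j : K) * u ^ j * (1 - u) ^ (n - j))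
      = c * u + d := by
  have hn' : (n : K) ≠ 0 := Nat.cast_ne_zero.2 hn
  have hsplit : ∀ j : ℕ, (c * ((j : K) / n) + d) * ((n.choose j : K) * u ^ j * (1 - u) ^ (n - j))
      = c / n * ((j : K) * ((n.choose j : K) * u ^ j * (1 - u) ^ (n - j)))
        + d * ((n.choose j : K) * u ^ j * (1 - u) ^ (n - j)) := fun j => by ring
  rw [sum_congr rfl fun j _ => hsplit j, sum_add_distrib, ← mul_sum, ← mul_sum,
    sum_mul_choose_mul_pow_mul_one_sub_pow, sum_choose_mul_pow_mul_one_sub_pow]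
  field_simp

theorem qy_eq_choose_mul_pow_mul_one_sub_pow {φ₁ φ₂ : ℝ → ℝ} {x : ℝ} (hφ : φ₁ x ≠ φ₂ x)
    (n j : ℕ) (y : ℝ) :
    qy φ₁ φ₂ x n j y = (n.choose j : ℝ) * ((y - φ₁ x) / (φ₂ x - φ₁ x)) ^ j *
      (1 - (y - φ₁ x) / (φ₂ x - φ₁ x)) ^ (n - j) := by
  have hne : φ₂ x - φ₁ x ≠ 0 := sub_ne_zero.2 hφ.symm
  rw [qy, one_sub_div hne, sub_sub_sub_cancel_right]

theorem sum_affine_mul_qy {φ₁ φ₂ : ℝ → ℝ} {x : ℝ} (hφ : φ₁ x ≠ φ₂ x) {n : ℕ} (hn : n ≠ 0)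
    (c d y : ℝ) :
    ∑ j ∈ range (n + 1), (c * ((j : ℝ) / n) + d) * qy φ₁ φ₂ x n j y
      = c * ((y - φ₁ x) / (φ₂ x - φ₁ x)) + d := by
  simp_rw [qy_eq_choose_mul_pow_mul_one_sub_pow hφ]
  exact sum_affine_mul_choose_mul_pow_mul_one_sub_pow hn c d _

theorem stmt14_general (α β b : ℝ)
    (φ₁ φ₂ : ℝ → ℝ)
    (hφ : ∀ x ∈ Set.Icc (α * b) (β * b), φ₁ x < φ₂ x)
    (m : ℕ) (mk : ℕ → ℕ) (hmk : ∀ k ≤ m, 1 ≤ mk k)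
    (x : ℝ) (hx : x ∈ Set.Icc (α * b) (β * b)) (y : ℝ) :
    BivCl α β b φ₁ φ₂ m mk (fun _ t => t) x y =
      ((y - φ₁ x) / (φ₂ x - φ₁ x)) * BCl α β b m (fun t => φ₂ t - φ₁ t) x +
        BCl α β b m φ₁ x := by
  rw [BivCl, BCl, BCl, mul_sum, ← sum_add_distrib]
  refine sum_congr rfl fun k hk => ?_
  have hmk0 : mk k ≠ 0 := Nat.one_le_iff_ne_zero.1 (hmk k (Nat.lt_succ_iff.1 (mem_range.1 hk)))
  have hnode : (β - α) * b * ((k : ℝ) / m) + α * b = (β - α) * k * b / m + α * b := by ring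
  simp_rw [hnode, mul_right_comm _ (qt α β b m k x), ← sum_mul,
    sum_affine_mul_qy (hφ x hx).ne hmk0]
  ring

theorem stmt14 (α β b : ℝ) (hαβ : α < β) (hb : 0 < b)
    (φ₁ φ₂ : ℝ → ℝ) (hφ₁ : Continuous φ₁) (hφ₂ : Continuous φ₂)
    (hφ : ∀ x ∈ Set.Icc (α * b) (β * b), φ₁ x < φ₂ x)
    (m : ℕ) (hm : 1 ≤ m) (mk : ℕ → ℕ) (hmk : ∀ k ≤ m, 1 ≤ mk k)
    (x : ℝ) (hx : x ∈ Set.Icc (α * b) (β * b)) (y : ℝ) :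
    BivCl α β b φ₁ φ₂ m mk (fun _ t => t) x y =
      ((y - φ₁ x) / (φ₂ x - φ₁ x)) * BCl α β b m (fun t => φ₂ t - φ₁ t) x +
        BCl α β b m φ₁ x :=
  stmt14_general α β b φ₁ φ₂ hφ m mk hmk x hx y
end

section
/- (Lemma 2(iii)) Let α < β, let (b_m)_{m≥1} be positive reals with lim_{m→∞} b_m²/m = 0, and let φ₁, φ₂ : ℝ → ℝ be bounded, uniformly continuous functions with φ₁(x) < φ₂(x) for all x ∈ ℝ. For each m ≥ 1 let m_k ≥ 1 (0 ≤ k ≤ m) be positive integers, let J_m = [α b_m, β b_m], and let Δ_m = {(x,y) : α b_m ≤ x ≤ β b_m, φ₁(x) ≤ y ≤ φ₂(x)}. Then the bivariate shifted Bernstein–Chlodowsky–Stancu operators applied to the coordinate function (x,y) ↦ y converge to y uniformly: sup_{(x,y) ∈ Δ_m} |B̃_m^{Cl}[y; Δ_m](x, y) − y| → 0 as m → ∞. -/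
open Finset Filter Real

/-!
Substituting `x = (β - α) b t + α b` and `y = (1 - s) φ₁(x) + s φ₂(x)` turns both basis families
into classical Bernstein bases. The inner sum over `j` is a Bernstein operator applied to a
function affine in its variable, which it reproduces, so the operator applied to `y` is
`(1 - s) L_m φ₁ + s L_m φ₂` with `L_m` the univariate shifted Chlodowsky operator, and the error is
a convex combination of the errors of `L_m φ₁` and `L_m φ₂`. For `|φ| ≤ C` with an `(ε, δ)`
modulus, `|φ u - φ v| ≤ ε + 2C (u - v)² / δ²`; the Bernstein variance identity turns this into
`|L_m φ - φ| ≤ ε + C ((β - α) b_m)² / (2 δ² m)`, which tends to `ε` since `b_m² / m → 0`.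
-/

namespace bernsteinPolynomial

lemma eval_eq (n ν : ℕ) (t : ℝ) :
    (bernsteinPolynomial ℝ n ν).eval t = n.choose ν * t ^ ν * (1 - t) ^ (n - ν) := by
  simp [bernsteinPolynomial]

lemma eval_nonneg {n ν : ℕ} {t : ℝ} (h0 : 0 ≤ t) (h1 : t ≤ 1) :
    0 ≤ (bernsteinPolynomial ℝ n ν).eval t := by
  have : 0 ≤ 1 - t := by linarith
  rw [eval_eq]
  positivity

lemma sum_eval (n : ℕ) (t : ℝ) :
    ∑ ν ∈ range (n + 1), (bernsteinPolynomial ℝ n ν).eval t = 1 := by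
  simpa [Polynomial.eval_finsetSum] using congrArg (Polynomial.eval t) (sum ℝ n)

lemma sum_mul_eval (n : ℕ) (t : ℝ) :
    ∑ ν ∈ range (n + 1), (ν : ℝ) * (bernsteinPolynomial ℝ n ν).eval t = n * t := by
  simpa [Polynomial.eval_finsetSum] using congrArg (Polynomial.eval t) (sum_smul ℝ n)

lemma sum_sq_mul_eval (n : ℕ) (t : ℝ) :
    ∑ ν ∈ range (n + 1), (n * t - ν) ^ 2 * (bernsteinPolynomial ℝ n ν).eval t
      = n * t * (1 - t) := by
  simpa [Polynomial.eval_finsetSum] using congrArg (Polynomial.eval t) (variance ℝ n)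

lemma sum_affine_mul_eval (A c t : ℝ) {n : ℕ} (hn : n ≠ 0) :
    ∑ ν ∈ range (n + 1), (A * ((ν : ℝ) / n) + c) * (bernsteinPolynomial ℝ n ν).eval t
      = A * t + c := by
  have hn' : (n : ℝ) ≠ 0 := Nat.cast_ne_zero.mpr hn
  calc ∑ ν ∈ range (n + 1), (A * ((ν : ℝ) / n) + c) * (bernsteinPolynomial ℝ n ν).eval t
      = A / n * ∑ ν ∈ range (n + 1), (ν : ℝ) * (bernsteinPolynomial ℝ n ν).eval t
        + c * ∑ ν ∈ range (n + 1), (bernsteinPolynomial ℝ n ν).eval t := by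
        rw [mul_sum, mul_sum, ← sum_add_distrib]
        exact sum_congr rfl fun ν _ => by ring
    _ = A * t + c := by
        rw [sum_mul_eval, sum_eval]
        field_simp

end bernsteinPolynomial

open bernsteinPolynomial

lemma qt_eq_eval {α β b : ℝ} (hc : (β - α) * b ≠ 0) {m k : ℕ} (hk : k ≤ m) (x : ℝ) :
    qt α β b m k x = (bernsteinPolynomial ℝ m k).eval ((x - α * b) / ((β - α) * b)) := by
  have hpow : ((β - α) * b) ^ k * ((β - α) * b) ^ (m - k) = ((β - α) * b) ^ m := by
    rw [← pow_add, Nat.add_sub_cancel' hk]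
  rw [qt, eval_eq, ← mul_pow, div_pow, one_sub_div hc, div_pow]
  field_simp
  linear_combination (m.choose k : ℝ) * (x - α * b) ^ k * (β * b - x) ^ (m - k) * hpow

lemma qy_eq_eval {φ₁ φ₂ : ℝ → ℝ} {x : ℝ} (hφ : φ₁ x < φ₂ x) (n j : ℕ) (y : ℝ) :
    qy φ₁ φ₂ x n j y = (bernsteinPolynomial ℝ n j).eval ((y - φ₁ x) / (φ₂ x - φ₁ x)) := by
  have h : (φ₂ x - y) / (φ₂ x - φ₁ x) = 1 - (y - φ₁ x) / (φ₂ x - φ₁ x) := by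
    field_simp [sub_ne_zero.mpr hφ.ne']
    ring
  rw [qy, eval_eq, h]

/-- The shifted Chlodowsky operator on `[a, a + c]`, written in the rescaled variable `t ∈ [0, 1]`. -/
noncomputable def chlodowsky (c a : ℝ) (φ : ℝ → ℝ) (m : ℕ) (t : ℝ) : ℝ :=
  ∑ k ∈ range (m + 1), φ (c * ((k : ℝ) / m) + a) * (bernsteinPolynomial ℝ m k).eval t

lemma abs_sub_le_of_abs_le_of_modulus {φ : ℝ → ℝ} {C δ ε : ℝ} (hC : ∀ z, |φ z| ≤ C)
    (hδ : 0 < δ) (hε : 0 ≤ ε) (hmod : ∀ u v, |u - v| < δ → |φ u - φ v| ≤ ε) (u v : ℝ) :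
    |φ u - φ v| ≤ ε + 2 * C / δ ^ 2 * (u - v) ^ 2 := by
  have hC0 : 0 ≤ C := (abs_nonneg _).trans (hC u)
  rcases lt_or_ge |u - v| δ with hnear | hfar
  · have : 0 ≤ 2 * C / δ ^ 2 * (u - v) ^ 2 := by positivity
    linarith [hmod u v hnear]
  · have hsq : δ ^ 2 ≤ (u - v) ^ 2 := by
      rw [← sq_abs (u - v)]
      exact pow_le_pow_left₀ hδ.le hfar 2
    have hbound : |φ u - φ v| ≤ 2 * C := by
      linarith [abs_sub (φ u) (φ v), hC u, hC v]
    have : 2 * C ≤ 2 * C / δ ^ 2 * (u - v) ^ 2 := by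
      rw [div_mul_eq_mul_div, le_div_iff₀ (by positivity)]
      exact mul_le_mul_of_nonneg_left hsq (by positivity)
    linarith

lemma abs_chlodowsky_sub_le {φ : ℝ → ℝ} {C δ ε : ℝ} (hC : ∀ z, |φ z| ≤ C)
    (hδ : 0 < δ) (hε : 0 ≤ ε) (hmod : ∀ u v, |u - v| < δ → |φ u - φ v| ≤ ε)
    (c a : ℝ) {m : ℕ} (hm : m ≠ 0) {t : ℝ} (ht0 : 0 ≤ t) (ht1 : t ≤ 1) :
    |chlodowsky c a φ m t - φ (c * t + a)| ≤ ε + C / (2 * δ ^ 2) * (c ^ 2 / m) := by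
  have hm' : (m : ℝ) ≠ 0 := Nat.cast_ne_zero.mpr hm
  set K := 2 * C / δ ^ 2
  have hK : 0 ≤ K := by have := (abs_nonneg _).trans (hC 0); positivity
  have hnode (k : ℕ) : (c * ((k : ℝ) / m) + a - (c * t + a)) ^ 2
      = c ^ 2 / m ^ 2 * (m * t - k) ^ 2 := by
    field_simp
    ring
  have hvar : t * (1 - t) ≤ 1 / 4 := by nlinarith [sq_nonneg (t - 1 / 2)]
  calc |chlodowsky c a φ m t - φ (c * t + a)|
      = |∑ k ∈ range (m + 1),
          (φ (c * ((k : ℝ) / m) + a) - φ (c * t + a)) * (bernsteinPolynomial ℝ m k).eval t| := by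
        rw [chlodowsky, sum_congr rfl fun k _ => sub_mul _ _ _, sum_sub_distrib, ← mul_sum,
          sum_eval, mul_one]
    _ ≤ ∑ k ∈ range (m + 1),
          (ε + K * (c * ((k : ℝ) / m) + a - (c * t + a)) ^ 2) *
            (bernsteinPolynomial ℝ m k).eval t := by
        refine (abs_sum_le_sum_abs _ _).trans (sum_le_sum fun k _ => ?_)
        rw [abs_mul, abs_of_nonneg (eval_nonneg ht0 ht1)]
        exact mul_le_mul_of_nonneg_right
          (abs_sub_le_of_abs_le_of_modulus hC hδ hε hmod _ _) (eval_nonneg ht0 ht1)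
    _ = ε + K * (c ^ 2 / m ^ 2) * (m * t * (1 - t)) := by
        simp_rw [hnode, add_mul, sum_add_distrib, ← mul_sum, sum_eval, mul_assoc, ← mul_sum,
          sum_sq_mul_eval]
        ring
    _ = ε + K * (c ^ 2 / m) * (t * (1 - t)) := by
        field_simp
    _ ≤ ε + K * (c ^ 2 / m) * (1 / 4) := by gcongr
    _ = ε + C / (2 * δ ^ 2) * (c ^ 2 / m) := by
        ring

lemma eventually_abs_chlodowsky_sub_lt {φ : ℝ → ℝ} (hbdd : ∃ C, ∀ z, |φ z| ≤ C)
    (hφ : UniformContinuous φ) {c a : ℕ → ℝ}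
    (hc : Tendsto (fun m : ℕ => c m ^ 2 / m) atTop (nhds 0)) {ε : ℝ} (hε : 0 < ε) :
    ∀ᶠ m in atTop, ∀ t ∈ Set.Icc (0 : ℝ) 1,
      |chlodowsky (c m) (a m) φ m t - φ (c m * t + a m)| < ε := by
  obtain ⟨C, hC⟩ := hbdd
  obtain ⟨δ, hδ, hmod⟩ := Metric.uniformContinuous_iff.mp hφ (ε / 2) (half_pos hε)
  have hmod' : ∀ u v, |u - v| < δ → |φ u - φ v| ≤ ε / 2 := fun u v h => (hmod h).le
  have hsmall : ∀ᶠ m in atTop, C / (2 * δ ^ 2) * (c m ^ 2 / m) < ε / 2 :=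
    (hc.const_mul _).eventually (gt_mem_nhds (by rw [mul_zero]; exact half_pos hε))
  filter_upwards [hsmall, eventually_ne_atTop 0] with m hm hm0 t ht
  have := abs_chlodowsky_sub_le hC hδ (half_pos hε).le hmod' (c m) (a m) hm0 ht.1 ht.2
  linarith

lemma bivCl_snd_eq {α β b : ℝ} (hc : (β - α) * b ≠ 0) {φ₁ φ₂ : ℝ → ℝ}
    (hφ : ∀ x, φ₁ x < φ₂ x) {m : ℕ} {mk : ℕ → ℕ} (hmk : ∀ k ≤ m, mk k ≠ 0)
    (x y : ℝ) :
    BivCl α β b φ₁ φ₂ m mk (fun _ v => v) x y =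
      (1 - (y - φ₁ x) / (φ₂ x - φ₁ x)) *
          chlodowsky ((β - α) * b) (α * b) φ₁ m ((x - α * b) / ((β - α) * b))
        + (y - φ₁ x) / (φ₂ x - φ₁ x) *
          chlodowsky ((β - α) * b) (α * b) φ₂ m ((x - α * b) / ((β - α) * b)) := by
  rw [BivCl, chlodowsky, chlodowsky, mul_sum, mul_sum, ← sum_add_distrib]
  refine sum_congr rfl fun k hk => ?_
  have hkm : k ≤ m := Nat.lt_succ_iff.mp (mem_range.mp hk)
  simp_rw [qt_eq_eval hc hkm, qy_eq_eval (hφ x),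
    mul_right_comm _ (Polynomial.eval ((x - α * b) / ((β - α) * b)) (bernsteinPolynomial ℝ m k)),
    ← sum_mul, sum_affine_mul_eval _ _ _ (hmk k hkm)]
  ring

lemma abs_convex_comb_sub_lt {s a b a' b' ε : ℝ} (hs0 : 0 ≤ s) (hs1 : s ≤ 1)
    (ha : |a - a'| < ε) (hb : |b - b'| < ε) :
    |(1 - s) * a + s * b - ((1 - s) * a' + s * b')| < ε := by
  calc |(1 - s) * a + s * b - ((1 - s) * a' + s * b')|
      = |(1 - s) * (a - a') + s * (b - b')| := by ring_nf
    _ ≤ (1 - s) * |a - a'| + s * |b - b'| := by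
        refine (abs_add_le _ _).trans_eq ?_
        rw [abs_mul, abs_mul, abs_of_nonneg (sub_nonneg.mpr hs1), abs_of_nonneg hs0]
    _ ≤ max |a - a'| |b - b'| := by
        nlinarith [mul_le_mul_of_nonneg_left (le_max_left |a - a'| |b - b'|) (sub_nonneg.mpr hs1),
          mul_le_mul_of_nonneg_left (le_max_right |a - a'| |b - b'|) hs0]
    _ < ε := max_lt ha hb

lemma abs_bivCl_snd_sub_lt {α β b : ℝ} (hc : 0 < (β - α) * b) {φ₁ φ₂ : ℝ → ℝ}
    (hφ : ∀ x, φ₁ x < φ₂ x) {m : ℕ} {mk : ℕ → ℕ} (hmk : ∀ k ≤ m, mk k ≠ 0) {ε : ℝ}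
    (h₁ : ∀ t ∈ Set.Icc (0 : ℝ) 1,
      |chlodowsky ((β - α) * b) (α * b) φ₁ m t - φ₁ ((β - α) * b * t + α * b)| < ε)
    (h₂ : ∀ t ∈ Set.Icc (0 : ℝ) 1,
      |chlodowsky ((β - α) * b) (α * b) φ₂ m t - φ₂ ((β - α) * b * t + α * b)| < ε)
    {x y : ℝ} (hx : x ∈ Set.Icc (α * b) (β * b)) (hy : y ∈ Set.Icc (φ₁ x) (φ₂ x)) :
    |BivCl α β b φ₁ φ₂ m mk (fun _ v => v) x y - y| < ε := by
  have hgap : 0 < φ₂ x - φ₁ x := sub_pos.mpr (hφ x)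
  rw [bivCl_snd_eq hc.ne' hφ hmk]
  set t := (x - α * b) / ((β - α) * b)
  set s := (y - φ₁ x) / (φ₂ x - φ₁ x)
  have ht : t ∈ Set.Icc (0 : ℝ) 1 :=
    ⟨div_nonneg (by linarith [hx.1]) hc.le, by rw [div_le_one hc]; linarith [hx.2]⟩
  have hxt : (β - α) * b * t + α * b = x := by rw [mul_div_cancel₀ _ hc.ne', sub_add_cancel]
  have hys : (1 - s) * φ₁ x + s * φ₂ x = y := by
    simp only [s]
    field_simp
    ring
  have hs0 : 0 ≤ s := div_nonneg (by linarith [hy.1]) hgap.le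
  have hs1 : s ≤ 1 := by rw [div_le_one hgap]; linarith [hy.2]
  rw [← hys]
  exact abs_convex_comb_sub_lt hs0 hs1 (hxt ▸ h₁ t ht) (hxt ▸ h₂ t ht)

theorem stmt15 (α β : ℝ) (hαβ : α < β) (b : ℕ → ℝ) (hb : ∀ m, 1 ≤ m → 0 < b m)
    (hlim : Filter.Tendsto (fun m : ℕ => (b m) ^ 2 / m) Filter.atTop (nhds 0))
    (φ₁ φ₂ : ℝ → ℝ)
    (hφ₁bdd : ∃ C, ∀ x, |φ₁ x| ≤ C) (hφ₂bdd : ∃ C, ∀ x, |φ₂ x| ≤ C)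
    (hφ₁u : UniformContinuous φ₁) (hφ₂u : UniformContinuous φ₂)
    (hφ : ∀ x, φ₁ x < φ₂ x)
    (mk : ℕ → ℕ → ℕ) (hmk : ∀ m, ∀ k ≤ m, 1 ≤ mk m k) :
    ∀ ε > 0, ∃ N, ∀ m ≥ N, 1 ≤ m →
      ∀ x ∈ Set.Icc (α * b m) (β * b m), ∀ y ∈ Set.Icc (φ₁ x) (φ₂ x),
        |BivCl α β (b m) φ₁ φ₂ m (mk m) (fun _ t => t) x y - y| < ε := by
  intro ε hε
  have hc : Tendsto (fun m : ℕ => ((β - α) * b m) ^ 2 / m) atTop (nhds 0) := by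
    simpa [mul_pow, mul_div_assoc] using hlim.const_mul ((β - α) ^ 2)
  obtain ⟨N, hN⟩ := eventually_atTop.mp <|
    (eventually_abs_chlodowsky_sub_lt (a := fun m => α * b m) hφ₁bdd hφ₁u hc hε).and
      (eventually_abs_chlodowsky_sub_lt (a := fun m => α * b m) hφ₂bdd hφ₂u hc hε)
  exact ⟨N, fun m hmN hm x hx y hy =>
    abs_bivCl_snd_sub_lt (mul_pos (sub_pos.mpr hαβ) (hb m hm)) hφ
      (fun k hk => Nat.one_le_iff_ne_zero.mp (hmk m k hk)) (hN m hmN).1 (hN m hmN).2 hx hy⟩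
end

section
/- (Main approximation theorem) Let α < β, let (b_m)_{m≥1} be positive reals with lim_{m→∞} b_m²/m = 0, and let φ₁, φ₂ : ℝ → ℝ be bounded, uniformly continuous functions with inf_{x ∈ ℝ} (φ₂(x) − φ₁(x)) > 0. Let g : ℝ² → ℝ be bounded and uniformly continuous. For each m ≥ 1 let m_k^{(m)} ≥ 1 (0 ≤ k ≤ m) be positive integers such that min_{0 ≤ k ≤ m} m_k^{(m)} → ∞ as m → ∞. Let J_m = [α b_m, β b_m] and Δ_m = {(x,y) : α b_m ≤ x ≤ β b_m, φ₁(x) ≤ y ≤ φ₂(x)}. Then the bivariate shifted Bernstein–Chlodowsky–Stancu operators converge to g uniformly: sup_{(x,y) ∈ Δ_m} |B̃_m^{Cl}[g; Δ_m](x, y) − g(x, y)| → 0 as m → ∞. -/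
open Finset Filter Real

/-!
With `x = αb + (β - α)b·u` and `y = φ₁(x) + (φ₂(x) - φ₁(x))·v`, `u, v ∈ [0, 1]`, the basis
functions `q̃_{m,k}(x; J)` and `q̃_{n,j}(y; [φ₁(x), φ₂(x)])` become the Bernstein polynomials
`p_{m,k}(u)` and `p_{n,j}(v)`, so the error is a double Bernstein average of
`G(k/m, j/m_k) - G(u, v)`, where `G(s, t) = g(αb + (β - α)b·s, φ₁ + (φ₂ - φ₁)·t)`.
Split each average at distance `δ` from `u` (resp. `v`). Near nodes contribute the modulus of
continuity of `g` pulled back to the strip, which is uniform because `φ₁, φ₂` are bounded and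
uniformly continuous. Far nodes carry total weight at most `1/(4nδ²)`, by Chebyshev's inequality
for the Bernstein variance `u(1 - u)/n`. In the variable `u` the mesh `δ` shrinks to
`δ/((β - α)b_m)`, so the outer tail is `O(b_m²/m)` and the inner one `O(1 / min_k m_k)`.
-/

section WeightedSum

variable {ι : Type*} {s : Finset ι} {w a : ι → ℝ}

lemma abs_sum_mul_le_of_sum_eq_one {M : ℝ} (hw : ∀ i ∈ s, 0 ≤ w i) (hsum : ∑ i ∈ s, w i = 1)
    (ha : ∀ i ∈ s, |a i| ≤ M) : |∑ i ∈ s, a i * w i| ≤ M :=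
  calc |∑ i ∈ s, a i * w i| ≤ ∑ i ∈ s, |a i * w i| := abs_sum_le_sum_abs _ _
    _ ≤ ∑ i ∈ s, M * w i := sum_le_sum fun i hi => by
        rw [abs_mul, abs_of_nonneg (hw i hi)]
        exact mul_le_mul_of_nonneg_right (ha i hi) (hw i hi)
    _ = M := by rw [← mul_sum, hsum, mul_one]

lemma abs_sum_mul_le_add_of_sum_eq_one (p : ι → Prop) [DecidablePred p] {M ε : ℝ}
    (hw : ∀ i ∈ s, 0 ≤ w i) (hsum : ∑ i ∈ s, w i = 1) (ha : ∀ i ∈ s, |a i| ≤ M)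
    (hε : 0 ≤ ε) (hgood : ∀ i ∈ s, ¬ p i → |a i| ≤ ε) :
    |∑ i ∈ s, a i * w i| ≤ ε + M * ∑ i ∈ s with p i, w i := by
  have hrest : ∑ i ∈ s with ¬ p i, w i ≤ 1 :=
    hsum ▸ sum_le_sum_of_subset_of_nonneg (filter_subset _ _) fun i hi _ => hw i hi
  calc |∑ i ∈ s, a i * w i| ≤ ∑ i ∈ s, |a i * w i| := abs_sum_le_sum_abs _ _
    _ ≤ ∑ i ∈ s, if p i then M * w i else ε * w i := sum_le_sum fun i hi => by
        rw [abs_mul, abs_of_nonneg (hw i hi)]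
        split_ifs with hp
        · exact mul_le_mul_of_nonneg_right (ha i hi) (hw i hi)
        · exact mul_le_mul_of_nonneg_right (hgood i hi hp) (hw i hi)
    _ = M * ∑ i ∈ s with p i, w i + ε * ∑ i ∈ s with ¬ p i, w i := by
        rw [sum_ite, mul_sum, mul_sum]
    _ ≤ ε + M * ∑ i ∈ s with p i, w i := by nlinarith

end WeightedSum

noncomputable def bernsteinBasis (n k : ℕ) (u : ℝ) : ℝ :=
  (n.choose k : ℝ) * u ^ k * (1 - u) ^ (n - k)

namespace bernsteinBasis

variable {n : ℕ} {u : ℝ}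

lemma nonneg (hu : u ∈ Set.Icc (0 : ℝ) 1) (k : ℕ) : 0 ≤ bernsteinBasis n k u := by
  have := hu.1
  have : 0 ≤ 1 - u := sub_nonneg.2 hu.2
  unfold bernsteinBasis
  positivity

lemma sum_eq_one (n : ℕ) (u : ℝ) : ∑ k ∈ range (n + 1), bernsteinBasis n k u = 1 := by
  have h := add_pow u (1 - u) n
  rw [add_sub_cancel, one_pow] at h
  rw [h]
  exact sum_congr rfl fun k _ => by unfold bernsteinBasis; ring

lemma variance (hn : n ≠ 0) (hu : u ∈ Set.Icc (0 : ℝ) 1) :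
    ∑ k ∈ range (n + 1), ((k : ℝ) / n - u) ^ 2 * bernsteinBasis n k u = u * (1 - u) / n := by
  rw [← bernstein.variance hn ⟨u, hu⟩, ← Fin.sum_univ_eq_sum_range]
  refine sum_congr rfl fun k _ => ?_
  rw [bernstein_apply, bernsteinBasis, bernstein.z, ← neg_sub, neg_sq]

lemma sum_far_le (hn : n ≠ 0) (hu : u ∈ Set.Icc (0 : ℝ) 1) {δ : ℝ} (hδ : 0 < δ) :
    ∑ k ∈ range (n + 1) with δ ≤ |((k : ℕ) : ℝ) / n - u|, bernsteinBasis n k u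
      ≤ 1 / (4 * n * δ ^ 2) := by
  have hn' : (0 : ℝ) < n := by positivity
  have hchebyshev : δ ^ 2 * ∑ k ∈ range (n + 1) with δ ≤ |((k : ℕ) : ℝ) / n - u|,
      bernsteinBasis n k u ≤ u * (1 - u) / n := by
    rw [← variance hn hu, mul_sum]
    refine (sum_le_sum fun k hk => ?_).trans <| sum_le_sum_of_subset_of_nonneg
      (filter_subset _ _) fun k _ _ => mul_nonneg (sq_nonneg _) (nonneg hu k)
    refine mul_le_mul_of_nonneg_right ?_ (nonneg hu k)
    rw [← sq_abs (_ - u)]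
    exact pow_le_pow_left₀ hδ.le (mem_filter.1 hk).2 2
  have hquarter : u * (1 - u) / n ≤ 1 / (4 * n) := by
    rw [div_le_div_iff₀ hn' (by positivity)]
    nlinarith [sq_nonneg (2 * u - 1)]
  rw [le_div_iff₀ (by positivity)]
  calc _ = δ ^ 2 * (∑ k ∈ range (n + 1) with δ ≤ |((k : ℕ) : ℝ) / n - u|,
        bernsteinBasis n k u) * (4 * n) := by ring
    _ ≤ 1 / (4 * n) * (4 * n) := by gcongr; exact hchebyshev.trans hquarter
    _ = 1 := by field_simp

end bernsteinBasis


namespace bernsteinBasis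

variable {n : ℕ} {u : ℝ}

theorem abs_sum_mul_le (hn : n ≠ 0) (hu : u ∈ Set.Icc (0 : ℝ) 1) {a : ℕ → ℝ} {M ε δ : ℝ}
    (hδ : 0 < δ) (hε : 0 ≤ ε) (ha : ∀ k ≤ n, |a k| ≤ M)
    (hgood : ∀ k ≤ n, |(k : ℝ) / n - u| < δ → |a k| ≤ ε) :
    |∑ k ∈ range (n + 1), a k * bernsteinBasis n k u| ≤ ε + M / (4 * n * δ ^ 2) := by
  have hM : 0 ≤ M := (abs_nonneg _).trans (ha 0 n.zero_le)
  calc _ ≤ ε + M * ∑ k ∈ range (n + 1) with δ ≤ |((k : ℕ) : ℝ) / n - u|,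
        bernsteinBasis n k u :=
        abs_sum_mul_le_add_of_sum_eq_one _ (fun k _ => nonneg hu k) (sum_eq_one n u)
          (fun k hk => ha k (mem_range_succ_iff.1 hk)) hε
          fun k hk hfar => hgood k (mem_range_succ_iff.1 hk) (not_le.1 hfar)
    _ ≤ ε + M * (1 / (4 * n * δ ^ 2)) := by gcongr; exact sum_far_le hn hu hδ
    _ = ε + M / (4 * n * δ ^ 2) := by ring

theorem abs_sum_sum_mul_le {m : ℕ} {nk : ℕ → ℕ} (hm : m ≠ 0) (hn : n ≠ 0)
    (hnk : ∀ k ≤ m, n ≤ nk k) {F : ℝ → ℝ → ℝ} {v M ε δ₁ δ₂ : ℝ}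
    (hu : u ∈ Set.Icc (0 : ℝ) 1) (hv : v ∈ Set.Icc (0 : ℝ) 1) (hδ₁ : 0 < δ₁) (hδ₂ : 0 < δ₂)
    (hε : 0 ≤ ε) (hM : ∀ s t, |F s t - F u v| ≤ M)
    (hF : ∀ s t, |s - u| < δ₁ → |t - v| < δ₂ → |F s t - F u v| ≤ ε) :
    |∑ k ∈ range (m + 1), (∑ j ∈ range (nk k + 1),
        (F (k / m) (j / nk k) - F u v) * bernsteinBasis (nk k) j v) * bernsteinBasis m k u|
      ≤ ε + M / (4 * n * δ₂ ^ 2) + M / (4 * m * δ₁ ^ 2) := by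
  have hM0 : 0 ≤ M := (abs_nonneg _).trans (hM u v)
  refine abs_sum_mul_le hm hu hδ₁ (by positivity) (fun k _ => ?_) fun k hk hku => ?_
  · exact abs_sum_mul_le_of_sum_eq_one (fun j _ => nonneg hv j) (sum_eq_one _ v)
      fun j _ => hM _ _
  · have hnk' : (n : ℝ) ≤ nk k := by exact_mod_cast hnk k hk
    calc _ ≤ ε + M / (4 * nk k * δ₂ ^ 2) :=
          abs_sum_mul_le (by have := hnk k hk; omega) hv hδ₂ hε (fun j _ => hM _ _)
            fun j _ hjv => hF _ _ hku hjv
      _ ≤ ε + M / (4 * n * δ₂ ^ 2) := by gcongr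

end bernsteinBasis

lemma qt_eq_bernsteinBasis {α β b : ℝ} (hαβ : α < β) (hb : 0 < b) {m k : ℕ} (hk : k ≤ m)
    (u : ℝ) : qt α β b m k ((β - α) * b * u + α * b) = bernsteinBasis m k u := by
  have hc : (β - α) * b ≠ 0 := (mul_pos (sub_pos.2 hαβ) hb).ne'
  have hpow : ((β - α) * b * u) ^ k * ((β - α) * b * (1 - u)) ^ (m - k)
      = ((β - α) * b) ^ m * (u ^ k * (1 - u) ^ (m - k)) := by
    rw [mul_pow _ u, mul_pow _ (1 - u), mul_mul_mul_comm, ← pow_add, Nat.add_sub_cancel' hk]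
  unfold qt bernsteinBasis
  rw [show (β - α) * b * u + α * b - α * b = (β - α) * b * u by ring,
    show β * b - ((β - α) * b * u + α * b) = (β - α) * b * (1 - u) by ring, mul_assoc, hpow,
    ← mul_pow]
  field_simp

lemma qy_eq_bernsteinBasis {φ₁ φ₂ : ℝ → ℝ} {x : ℝ} (hφ : φ₁ x ≠ φ₂ x) (n j : ℕ) (v : ℝ) :
    qy φ₁ φ₂ x n j ((φ₂ x - φ₁ x) * v + φ₁ x) = bernsteinBasis n j v := by
  have : φ₂ x - φ₁ x ≠ 0 := sub_ne_zero.2 hφ.symm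
  unfold qy bernsteinBasis
  congr 3 <;> field_simp <;> ring

noncomputable def stripPullback (φ₁ φ₂ : ℝ → ℝ) (g : ℝ → ℝ → ℝ) (x v : ℝ) : ℝ :=
  g x ((φ₂ x - φ₁ x) * v + φ₁ x)

lemma BivCl_sub_eq {α β b : ℝ} (hαβ : α < β) (hb : 0 < b) (φ₁ φ₂ : ℝ → ℝ) (m : ℕ)
    (mk : ℕ → ℕ) (g : ℝ → ℝ → ℝ) {x y u v : ℝ} (hφ : φ₁ x ≠ φ₂ x)
    (hxu : (β - α) * b * u + α * b = x) (hyv : (φ₂ x - φ₁ x) * v + φ₁ x = y) :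
    BivCl α β b φ₁ φ₂ m mk g x y - g x y
      = ∑ k ∈ range (m + 1), (∑ j ∈ range (mk k + 1),
          (stripPullback φ₁ φ₂ g ((β - α) * b * (k / m) + α * b) (j / mk k)
            - stripPullback φ₁ φ₂ g ((β - α) * b * u + α * b) v) * bernsteinBasis (mk k) j v)
          * bernsteinBasis m k u := by
  have hqt : ∀ k ∈ range (m + 1), qt α β b m k x = bernsteinBasis m k u := fun k hk =>
    hxu ▸ qt_eq_bernsteinBasis hαβ hb (mem_range_succ_iff.1 hk) u
  have hBivCl : BivCl α β b φ₁ φ₂ m mk g x y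
      = ∑ k ∈ range (m + 1), (∑ j ∈ range (mk k + 1),
          stripPullback φ₁ φ₂ g ((β - α) * b * (k / m) + α * b) (j / mk k)
            * bernsteinBasis (mk k) j v) * bernsteinBasis m k u := by
    refine sum_congr rfl fun k hk => ?_
    rw [sum_mul]
    refine sum_congr rfl fun j _ => ?_
    rw [hqt k hk, ← hyv, qy_eq_bernsteinBasis hφ, stripPullback]
    ring
  rw [hBivCl, hxu, show g x y = stripPullback φ₁ φ₂ g x v by rw [stripPullback, hyv]]
  simp only [sub_mul, sum_sub_distrib, ← mul_sum, bernsteinBasis.sum_eq_one, mul_one]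

lemma exists_pos_abs_stripPullback_sub_lt {φ₁ φ₂ : ℝ → ℝ} {g : ℝ → ℝ → ℝ}
    (hφ₁ : UniformContinuous φ₁) (hφ₂ : UniformContinuous φ₂) {D : ℝ}
    (hD : ∀ x, |φ₂ x - φ₁ x| ≤ D) (hg : UniformContinuous fun p : ℝ × ℝ => g p.1 p.2)
    {ε : ℝ} (hε : 0 < ε) :
    ∃ δ > 0, ∀ x x' v v', v' ∈ Set.Icc (0 : ℝ) 1 → |x - x'| < δ → |v - v'| < δ →
      |stripPullback φ₁ φ₂ g x v - stripPullback φ₁ φ₂ g x' v'| < ε := by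
  obtain ⟨η, hη, hgη⟩ := Metric.uniformContinuous_iff.1 hg ε hε
  obtain ⟨δφ, hδφ, hφδ⟩ :=
    Metric.uniformContinuous_iff.1 (hφ₁.prodMk hφ₂) (η / 2) (half_pos hη)
  have hD0 : 0 ≤ D := (abs_nonneg _).trans (hD 0)
  refine ⟨min (min η δφ) (η / 2 / (D + 1)), by positivity, fun x x' v v' hv' hx hv => ?_⟩
  simp only [lt_min_iff] at hx hv
  have hφ := hφδ (a := x) (b := x') (by rw [Real.dist_eq]; exact hx.1.2)
  simp only [Prod.dist_eq, Real.dist_eq, max_lt_iff, abs_lt] at hφ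
  obtain ⟨⟨h₁, h₁'⟩, h₂, h₂'⟩ := hφ
  -- `y - y'` is a convex combination of the increments of `φ₁` and `φ₂`, plus `v - v'` times
  -- the width of the strip at `x`.
  have hconv : |(1 - v') * (φ₁ x - φ₁ x') + v' * (φ₂ x - φ₂ x')| ≤ η / 2 := by
    have hw : 0 ≤ 1 - v' := sub_nonneg.2 hv'.2
    rw [abs_le]
    constructor <;> nlinarith [hv'.1]
  have hslope : |(v - v') * (φ₂ x - φ₁ x)| < η / 2 := by
    rw [abs_mul]
    calc |v - v'| * |φ₂ x - φ₁ x| ≤ |v - v'| * (D + 1) := by gcongr; linarith [hD x]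
      _ < η / 2 / (D + 1) * (D + 1) := by gcongr; exact hv.2
      _ = η / 2 := by field_simp
  rw [← Real.dist_eq]
  refine hgη (a := (x, _)) (b := (x', _)) ?_
  rw [Prod.dist_eq, max_lt_iff, Real.dist_eq, Real.dist_eq]
  refine ⟨hx.1.1, ?_⟩
  calc _ = |((1 - v') * (φ₁ x - φ₁ x') + v' * (φ₂ x - φ₂ x'))
          + (v - v') * (φ₂ x - φ₁ x)| := by ring_nf
    _ ≤ _ := abs_add_le _ _
    _ < η := by linarith

lemma exists_mem_Icc_mul_add_eq {lo hi x : ℝ} (h : lo < hi) (hx : x ∈ Set.Icc lo hi) :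
    ∃ u ∈ Set.Icc (0 : ℝ) 1, (hi - lo) * u + lo = x := by
  have hlen : 0 < hi - lo := sub_pos.2 h
  refine ⟨(x - lo) / (hi - lo), ⟨by have := hx.1; positivity, ?_⟩, ?_⟩
  · exact div_le_one_of_le₀ (by linarith [hx.2]) hlen.le
  · rw [mul_div_cancel₀ _ hlen.ne']
    ring

theorem abs_BivCl_sub_le {α β b : ℝ} (hαβ : α < β) (hb : 0 < b) {φ₁ φ₂ : ℝ → ℝ}
    {g : ℝ → ℝ → ℝ} {m n : ℕ} {mk : ℕ → ℕ} (hm : m ≠ 0) (hn : n ≠ 0)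
    (hmk : ∀ k ≤ m, n ≤ mk k)
    {M ε δ : ℝ} (hδ : 0 < δ) (hε : 0 ≤ ε) (hM : ∀ x y x' y', |g x y - g x' y'| ≤ M)
    (hmod : ∀ x x' v v', v' ∈ Set.Icc (0 : ℝ) 1 → |x - x'| < δ → |v - v'| < δ →
      |stripPullback φ₁ φ₂ g x v - stripPullback φ₁ φ₂ g x' v'| ≤ ε)
    {x y : ℝ} (hx : x ∈ Set.Icc (α * b) (β * b)) (hφ : φ₁ x < φ₂ x)
    (hy : y ∈ Set.Icc (φ₁ x) (φ₂ x)) :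
    |BivCl α β b φ₁ φ₂ m mk g x y - g x y|
      ≤ ε + M / (4 * n * δ ^ 2) + M * ((β - α) * b) ^ 2 / (4 * m * δ ^ 2) := by
  have hc : 0 < (β - α) * b := mul_pos (sub_pos.2 hαβ) hb
  obtain ⟨u, hu, hxu⟩ := exists_mem_Icc_mul_add_eq (mul_lt_mul_of_pos_right hαβ hb) hx
  obtain ⟨v, hv, hyv⟩ := exists_mem_Icc_mul_add_eq hφ hy
  rw [← sub_mul] at hxu
  rw [BivCl_sub_eq hαβ hb φ₁ φ₂ m mk g hφ.ne hxu hyv]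
  calc _ ≤ ε + M / (4 * n * δ ^ 2) + M / (4 * m * (δ / ((β - α) * b)) ^ 2) :=
        bernsteinBasis.abs_sum_sum_mul_le
          (F := fun s t => stripPullback φ₁ φ₂ g ((β - α) * b * s + α * b) t)
          hm hn hmk hu hv (div_pos hδ hc) hδ hε
          (fun s t => by simp only [stripPullback]; exact hM _ _ _ _) fun s t hs ht => by
            refine hmod _ _ _ _ hv ?_ ht
            rw [add_sub_add_right_eq_sub, ← mul_sub, abs_mul, abs_of_pos hc]
            exact (lt_div_iff₀' hc).1 hs
    _ = ε + M / (4 * n * δ ^ 2) + M * ((β - α) * b) ^ 2 / (4 * m * δ ^ 2) := by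
        field_simp

theorem stmt18_general (α β : ℝ) (hαβ : α < β) (b : ℕ → ℝ) (hb : ∀ m, 1 ≤ m → 0 < b m)
    (hlim : Filter.Tendsto (fun m : ℕ => (b m) ^ 2 / m) Filter.atTop (nhds 0))
    (φ₁ φ₂ : ℝ → ℝ)
    (hφ₁bdd : ∃ C, ∀ x, |φ₁ x| ≤ C) (hφ₂bdd : ∃ C, ∀ x, |φ₂ x| ≤ C)
    (hφ₁u : UniformContinuous φ₁) (hφ₂u : UniformContinuous φ₂)
    (hgap : ∃ c > (0 : ℝ), ∀ x, c ≤ φ₂ x - φ₁ x)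
    (g : ℝ → ℝ → ℝ) (hgbdd : ∃ C, ∀ x y, |g x y| ≤ C)
    (hgu : UniformContinuous (fun p : ℝ × ℝ => g p.1 p.2))
    (mk : ℕ → ℕ → ℕ)
    (hmkmin : ∀ C : ℕ, ∃ N, ∀ m ≥ N, ∀ k ≤ m, C ≤ mk m k) :
    ∀ ε > 0, ∃ N, ∀ m ≥ N, 1 ≤ m →
      ∀ x ∈ Set.Icc (α * b m) (β * b m), ∀ y ∈ Set.Icc (φ₁ x) (φ₂ x),
        |BivCl α β (b m) φ₁ φ₂ m (mk m) g x y - g x y| < ε := by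
  intro ε hε
  obtain ⟨C₁, hC₁⟩ := hφ₁bdd
  obtain ⟨C₂, hC₂⟩ := hφ₂bdd
  obtain ⟨c, hc, hgap⟩ := hgap
  obtain ⟨C, hC⟩ := hgbdd
  have hosc : ∀ x y x' y', |g x y - g x' y'| ≤ 2 * C := fun x y x' y' =>
    (abs_sub _ _).trans (by linarith [hC x y, hC x' y'])
  obtain ⟨δ, hδ, hmod⟩ := exists_pos_abs_stripPullback_sub_lt hφ₁u hφ₂u
    (fun x => (abs_sub _ _).trans (add_le_add (hC₂ x) (hC₁ x))) hgu (half_pos hε)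
  have hinner : Tendsto (fun n : ℕ => 2 * C / (4 * n * δ ^ 2)) atTop (nhds 0) :=
    (tendsto_const_div_atTop_nhds_zero_nat (2 * C / (4 * δ ^ 2))).congr fun n => by ring
  have houter :
      Tendsto (fun m : ℕ => 2 * C * ((β - α) * b m) ^ 2 / (4 * m * δ ^ 2)) atTop (nhds 0) := by
    have h := hlim.const_mul (2 * C * (β - α) ^ 2 / (4 * δ ^ 2))
    rw [mul_zero] at h
    exact h.congr fun m => by ring
  have hε4 : 0 < ε / 4 := by positivity
  obtain ⟨n, hn_tail, hn⟩ :=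
    ((hinner.eventually (gt_mem_nhds hε4)).and (eventually_ne_atTop 0)).exists
  obtain ⟨N₁, hN₁⟩ := hmkmin n
  obtain ⟨N₂, hN₂⟩ := eventually_atTop.1 (houter.eventually (gt_mem_nhds hε4))
  refine ⟨max N₁ N₂, fun m hm hm1 x hx y hy => ?_⟩
  calc _ ≤ ε / 2 + 2 * C / (4 * n * δ ^ 2) + 2 * C * ((β - α) * b m) ^ 2 / (4 * m * δ ^ 2) :=
        abs_BivCl_sub_le hαβ (hb m hm1) (by omega) hn (hN₁ m (le_of_max_le_left hm)) hδ
          (by positivity) hosc (fun x x' v v' hv' hx hv => (hmod x x' v v' hv' hx hv).le) hx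
          (by linarith [hgap x]) hy
    _ < ε := by linarith [hN₂ m (le_of_max_le_right hm)]

theorem stmt18 (α β : ℝ) (hαβ : α < β) (b : ℕ → ℝ) (hb : ∀ m, 1 ≤ m → 0 < b m)
    (hlim : Filter.Tendsto (fun m : ℕ => (b m) ^ 2 / m) Filter.atTop (nhds 0))
    (φ₁ φ₂ : ℝ → ℝ)
    (hφ₁bdd : ∃ C, ∀ x, |φ₁ x| ≤ C) (hφ₂bdd : ∃ C, ∀ x, |φ₂ x| ≤ C)
    (hφ₁u : UniformContinuous φ₁) (hφ₂u : UniformContinuous φ₂)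
    (hgap : ∃ c > (0 : ℝ), ∀ x, c ≤ φ₂ x - φ₁ x)
    (g : ℝ → ℝ → ℝ) (hgbdd : ∃ C, ∀ x y, |g x y| ≤ C)
    (hgu : UniformContinuous (fun p : ℝ × ℝ => g p.1 p.2))
    (mk : ℕ → ℕ → ℕ) (hmk : ∀ m, ∀ k ≤ m, 1 ≤ mk m k)
    (hmkmin : ∀ C : ℕ, ∃ N, ∀ m ≥ N, ∀ k ≤ m, C ≤ mk m k) :
    ∀ ε > 0, ∃ N, ∀ m ≥ N, 1 ≤ m →
      ∀ x ∈ Set.Icc (α * b m) (β * b m), ∀ y ∈ Set.Icc (φ₁ x) (φ₂ x),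
        |BivCl α β (b m) φ₁ φ₂ m (mk m) g x y - g x y| < ε :=
  stmt18_general α β hαβ b hb hlim φ₁ φ₂ hφ₁bdd hφ₂bdd hφ₁u hφ₂u hgap g hgbdd hgu mk hmkmin
end
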